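/- Let p ≥ 2 be an even integer, let J, T0 be positive integers, let f be a positive integer, and let λ̄, ξ > 0 and w̄ ≥ 0. On a probability space, let {ε_{j,s} : 1 ≤ j ≤ J, 1 ≤ s ≤ T0} be real random variables such that for each j the variables ε_{j,1}, …, ε_{j,T0} are independent with E[ε_{j,s}] = 0 and E|ε_{j,s}|^p < ∞, and set m̄_q = max_{1 ≤ j ≤ J} (1/T0)·∑_{s=1}^{T0} E|ε_{j,s}|^q for q ∈ {2, p}. Let c_1, …, c_{T0} be real numbers with |c_s| ≤ λ̄² f / (T0 ξ) for all s, set ε̄_j = ∑_{s=1}^{T0} c_s ε_{j,s}, and let W_1, …, W_J be random variables with |W_j| ≤ w̄ almost surely. Then E| ∑_{j=1}^{J} W_j ε̄_j | ≤ w̄ · J · C(p)^{1/p} · (λ̄² f / ξ) · max{ m̄_p^{1/p} / T0^{1−1/p}, m̄_2^{1/2} / T0^{1/2} }. -/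

import Mathlib

/-!
Each `ε̄_j` is a weighted sum of independent centred variables, so
`E ε̄_j² = ∑_s c_s² E ε_{j,s}² ≤ (λ̄² f / (T0 ξ))² · T0 m̄₂`, and `E|ε̄_j| ≤ (E ε̄_j²)^{1/2}`
gives `E|ε̄_j| ≤ (λ̄² f / ξ) · m̄₂^{1/2} / T0^{1/2}`. Summing over `j` against `|W_j| ≤ w̄`
bounds the left side by the second entry of the maximum. It remains that `C(p) ≥ 1`:
termwise `(n - 1)^p ≥ (n - 1)^2` for even `p`, and the variance of a Poisson(1) variable is `1`,
read off from its factorial moments `E[θ(θ-1)⋯(θ-k+1)] = 1`.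
-/

open MeasureTheory ProbabilityTheory Finset
open scoped Nat

/-- `C(p) = E[(θ − 1)^p]` where `θ` is a Poisson random variable with parameter 1. -/
noncomputable def poissonRosenthalConst (p : ℕ) : ℝ :=
  ∑' n : ℕ, (Real.exp (-1) / (n.factorial : ℝ)) * ((n : ℝ) - 1) ^ p

lemma hasSum_poisson_one_mul_descFactorial (k : ℕ) :
    HasSum (fun n : ℕ => Real.exp (-1) / n ! * (n.descFactorial k : ℝ)) 1 := by
  have hshift : ∀ n, Real.exp (-1) / (n + k)! * ((n + k).descFactorial k : ℝ) =
      Real.exp (-1) / n ! := by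
    intro n
    rw [← Nat.factorial_mul_descFactorial (Nat.le_add_left k n), Nat.add_sub_cancel]
    push_cast
    have : ((n + k).descFactorial k : ℝ) ≠ 0 := by
      exact_mod_cast (Nat.descFactorial_eq_zero_iff_lt.not.mpr (by omega))
    field_simp
  have hlow : ∑ n ∈ range k, Real.exp (-1) / n ! * (n.descFactorial k : ℝ) = 0 :=
    sum_eq_zero fun n hn => by
      rw [Nat.descFactorial_eq_zero_iff_lt.mpr (mem_range.mp hn)]; simp
  rw [← hasSum_nat_add_iff' k, hlow, sub_zero]
  simp only [hshift]
  simpa using hasSum_one_poissonMeasure 1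

lemma hasSum_poisson_one_mul_sub_one_sq :
    HasSum (fun n : ℕ => Real.exp (-1) / n ! * ((n : ℝ) - 1) ^ 2) 1 := by
  have hsq : ∀ n : ℕ, ((n : ℝ) - 1) ^ 2 =
      n.descFactorial 2 - n.descFactorial 1 + n.descFactorial 0 := fun n => by
    rw [Nat.cast_descFactorial_two, Nat.descFactorial_one, Nat.descFactorial_zero]
    push_cast
    ring
  simp only [hsq, mul_add, mul_sub]
  simpa using ((hasSum_poisson_one_mul_descFactorial 2).sub
    (hasSum_poisson_one_mul_descFactorial 1)).add (hasSum_poisson_one_mul_descFactorial 0)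

lemma summable_poisson_one_mul_sub_one_pow (k : ℕ) :
    Summable fun n : ℕ => Real.exp (-1) / n ! * ((n : ℝ) - 1) ^ k := by
  refine .of_norm_bounded (NormedSpace.expSeries_div_summable ((2 : ℝ) ^ k)) fun n => ?_
  have hn : |(n : ℝ) - 1| ≤ 2 ^ n := by
    have : (n : ℝ) + 1 ≤ 2 ^ n := by exact_mod_cast Nat.lt_two_pow_self
    rw [abs_le]; constructor <;> linarith [(n.cast_nonneg : (0 : ℝ) ≤ n)]
  have hpow : |(n : ℝ) - 1| ^ k ≤ ((2 : ℝ) ^ k) ^ n := by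
    rw [← pow_mul, mul_comm, pow_mul]
    gcongr
  rw [Real.norm_eq_abs, abs_mul, abs_pow, abs_of_nonneg (by positivity)]
  calc Real.exp (-1) / n ! * |(n : ℝ) - 1| ^ k ≤ 1 / n ! * ((2 : ℝ) ^ k) ^ n := by
        gcongr
        exact Real.exp_le_one_iff.mpr (by norm_num)
    _ = ((2 : ℝ) ^ k) ^ n / n ! := by ring

lemma one_le_poissonRosenthalConst {p : ℕ} (hp : Even p) (hp2 : 2 ≤ p) :
    1 ≤ poissonRosenthalConst p := by
  rw [← hasSum_poisson_one_mul_sub_one_sq.tsum_eq, poissonRosenthalConst]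
  refine Summable.tsum_le_tsum (fun n => ?_) (summable_poisson_one_mul_sub_one_pow 2)
    (summable_poisson_one_mul_sub_one_pow p)
  refine mul_le_mul_of_nonneg_left ?_ (by positivity)
  rcases n with _ | _ | n
  · simp [hp.neg_one_pow]
  · simp [zero_pow (by omega : p ≠ 0)]
  · exact pow_le_pow_right₀ (by push_cast; linarith [(n.cast_nonneg : (0 : ℝ) ≤ n)]) hp2

section Moments

variable {Ω ι : Type*} [MeasurableSpace Ω] {P : Measure Ω}

lemma memLp_two_of_integrable_abs_pow [IsFiniteMeasure P] {X : Ω → ℝ} {p : ℕ}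
    (hX : AEStronglyMeasurable X P) (hp : 2 ≤ p) (h : Integrable (fun ω => |X ω| ^ p) P) :
    MemLp X 2 P := by
  have hXp : MemLp X p P := by
    rw [← integrable_norm_rpow_iff hX (by simp; omega) (by simp)]
    simpa using h
  exact hXp.mono_exponent (by exact_mod_cast hp)

lemma integral_abs_le_sqrt_integral_sq [IsProbabilityMeasure P] {Y : Ω → ℝ} (hY : MemLp Y 2 P) :
    ∫ ω, |Y ω| ∂P ≤ Real.sqrt (∫ ω, Y ω ^ 2 ∂P) := by
  have hvar := variance_eq_sub hY.abs
  simp only [Pi.abs_apply, Pi.pow_apply, sq_abs] at hvar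
  refine Real.le_sqrt_of_sq_le ?_
  linarith [variance_nonneg |Y| P]

lemma integral_sq_sum_const_mul [IsFiniteMeasure P] [Fintype ι] {X : ι → Ω → ℝ} (c : ι → ℝ)
    (hX : ∀ s, MemLp (X s) 2 P) (hmean : ∀ s, ∫ ω, X s ω ∂P = 0)
    (hindep : Pairwise fun s t => IndepFun (X s) (X t) P) :
    ∫ ω, (∑ s, c s * X s ω) ^ 2 ∂P = ∑ s, c s ^ 2 * ∫ ω, X s ω ^ 2 ∂P := by
  have hcX : ∀ s ∈ univ, MemLp (fun ω => c s * X s ω) 2 P := fun s _ => (hX s).const_mul (c s)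
  have hsum_mean : ∫ ω, ∑ s, c s * X s ω ∂P = 0 := by
    rw [integral_finsetSum _ fun s _ => ((hX s).integrable one_le_two).const_mul _]
    simp [integral_const_mul, hmean]
  have hfun : (fun ω => ∑ s, c s * X s ω) = ∑ s, fun ω => c s * X s ω := by
    ext ω; simp
  rw [← variance_of_integral_eq_zero (memLp_finsetSum _ hcX).aemeasurable hsum_mean, hfun,
    IndepFun.variance_sum hcX fun s _ t _ hst =>
      (hindep hst).comp (measurable_const_mul (c s)) (measurable_const_mul (c t))]
  refine sum_congr rfl fun s _ => ?_
  rw [variance_const_mul, variance_of_integral_eq_zero (hX s).aemeasurable (hmean s)]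

lemma integral_abs_sum_const_mul_le [IsProbabilityMeasure P] [Fintype ι] {X : ι → Ω → ℝ}
    {c : ι → ℝ} {K : ℝ} (hK : 0 ≤ K) (hc : ∀ s, |c s| ≤ K)
    (hX : ∀ s, MemLp (X s) 2 P) (hmean : ∀ s, ∫ ω, X s ω ∂P = 0)
    (hindep : Pairwise fun s t => IndepFun (X s) (X t) P) :
    ∫ ω, |∑ s, c s * X s ω| ∂P ≤ K * Real.sqrt (∑ s, ∫ ω, X s ω ^ 2 ∂P) := by
  have hsum : MemLp (fun ω => ∑ s, c s * X s ω) 2 P :=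
    memLp_finsetSum _ fun s _ => (hX s).const_mul (c s)
  have hcoef : ∑ s, c s ^ 2 * ∫ ω, X s ω ^ 2 ∂P ≤ K ^ 2 * ∑ s, ∫ ω, X s ω ^ 2 ∂P := by
    rw [mul_sum]
    refine sum_le_sum fun s _ => mul_le_mul_of_nonneg_right ?_ (integral_nonneg fun ω => sq_nonneg _)
    exact sq_le_sq.mpr ((hc s).trans (le_abs_self K))
  calc ∫ ω, |∑ s, c s * X s ω| ∂P
      ≤ Real.sqrt (∫ ω, (∑ s, c s * X s ω) ^ 2 ∂P) := integral_abs_le_sqrt_integral_sq hsum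
    _ ≤ Real.sqrt (K ^ 2 * ∑ s, ∫ ω, X s ω ^ 2 ∂P) := by
      rw [integral_sq_sum_const_mul c hX hmean hindep]
      exact Real.sqrt_le_sqrt hcoef
    _ = K * Real.sqrt (∑ s, ∫ ω, X s ω ^ 2 ∂P) := by
      rw [Real.sqrt_mul (sq_nonneg K), Real.sqrt_sq hK]

lemma integral_abs_sum_const_mul_le_of_mean_sq_le [IsProbabilityMeasure P] {T : ℕ} (hT : 0 < T)
    {X : Fin T → Ω → ℝ} {c : Fin T → ℝ} {B m : ℝ} (hB : 0 ≤ B) (hc : ∀ s, |c s| ≤ B / T)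
    (hX : ∀ s, MemLp (X s) 2 P) (hmean : ∀ s, ∫ ω, X s ω ∂P = 0)
    (hindep : Pairwise fun s t => IndepFun (X s) (X t) P)
    (hm : (T : ℝ)⁻¹ * ∑ s, ∫ ω, X s ω ^ 2 ∂P ≤ m) :
    ∫ ω, |∑ s, c s * X s ω| ∂P ≤ B * (Real.sqrt m / Real.sqrt T) := by
  have hT' : (0 : ℝ) < T := by exact_mod_cast hT
  calc ∫ ω, |∑ s, c s * X s ω| ∂P
      ≤ B / T * Real.sqrt (∑ s, ∫ ω, X s ω ^ 2 ∂P) :=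
        integral_abs_sum_const_mul_le (by positivity) hc hX hmean hindep
    _ ≤ B / T * Real.sqrt (T * m) := by gcongr; exact (inv_mul_le_iff₀ hT').mp hm
    _ = B * (Real.sqrt m / Real.sqrt T) := by
        rw [Real.sqrt_mul hT'.le]
        field_simp
        rw [Real.sq_sqrt hT'.le]

lemma integral_abs_sum_mul_le_of_abs_le [Fintype ι] {W Y : ι → Ω → ℝ} {w : ℝ}
    (hW : ∀ᵐ ω ∂P, ∀ j, |W j ω| ≤ w) (hY : ∀ j, Integrable (Y j) P) :
    ∫ ω, |∑ j, W j ω * Y j ω| ∂P ≤ w * ∑ j, ∫ ω, |Y j ω| ∂P := by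
  rw [← integral_finsetSum _ fun j _ => (hY j).abs, ← integral_const_mul]
  refine integral_mono_of_nonneg (ae_of_all _ fun ω => abs_nonneg _)
    ((integrable_finsetSum _ fun j _ => (hY j).abs).const_mul w) ?_
  filter_upwards [hW] with ω hω
  calc |∑ j, W j ω * Y j ω| ≤ ∑ j, |W j ω| * |Y j ω| := by
        simpa only [abs_mul] using Finset.abs_sum_le_sum_abs (fun j => W j ω * Y j ω) univ
    _ ≤ ∑ j, w * |Y j ω| := by gcongr with j; exact hω j
    _ = w * ∑ j, |Y j ω| := by rw [mul_sum]

end Moments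

theorem expected_bias_term_bound_general
    {Ω : Type*} [MeasurableSpace Ω] (P : Measure Ω) [IsProbabilityMeasure P]
    (p J T0 f : ℕ) (hp : Even p) (hp2 : 2 ≤ p) (hT0 : 0 < T0)
    (lamBar ξ wBar : ℝ) (hξ : 0 < ξ) (hw : 0 ≤ wBar)
    (ε : Fin J → Fin T0 → Ω → ℝ)
    (hmeas : ∀ j s, Measurable (ε j s))
    (hindep : ∀ j, iIndepFun (ε j) P)
    (hmean : ∀ j s, ∫ ω, ε j s ω ∂P = 0)
    (hmom : ∀ j s, Integrable (fun ω => |ε j s ω| ^ p) P)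
    (mbar2 mbarp : ℝ)
    (hmbar2 : mbar2 = ⨆ j : Fin J, (T0 : ℝ)⁻¹ * ∑ s, ∫ ω, |ε j s ω| ^ 2 ∂P)
    (c : Fin T0 → ℝ) (hc : ∀ s, |c s| ≤ lamBar ^ 2 * f / (T0 * ξ))
    (εbar : Fin J → Ω → ℝ) (hεbar : ∀ j ω, εbar j ω = ∑ s, c s * ε j s ω)
    (W : Fin J → Ω → ℝ)
    (hWbd : ∀ᵐ ω ∂P, ∀ j, |W j ω| ≤ wBar) :
    ∫ ω, |∑ j, W j ω * εbar j ω| ∂P ≤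
      wBar * J * poissonRosenthalConst p ^ ((1 : ℝ) / p) * (lamBar ^ 2 * f / ξ) *
        max (mbarp ^ ((1 : ℝ) / p) / (T0 : ℝ) ^ (1 - 1 / (p : ℝ)))
          (Real.sqrt mbar2 / Real.sqrt T0) := by
  have hL2 : ∀ j s, MemLp (ε j s) 2 P := fun j s =>
    memLp_two_of_integrable_abs_pow (hmeas j s).aestronglyMeasurable hp2 (hmom j s)
  have hεbar_eq : ∀ j, εbar j = fun ω => ∑ s, c s * ε j s ω := fun j => funext (hεbar j)
  have hεbar_L1 : ∀ j, ∫ ω, |εbar j ω| ∂P ≤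
      lamBar ^ 2 * f / ξ * (Real.sqrt mbar2 / Real.sqrt T0) := fun j => by
    rw [hεbar_eq j]
    refine integral_abs_sum_const_mul_le_of_mean_sq_le hT0 (by positivity)
      (fun s => (hc s).trans_eq (by rw [div_div, mul_comm ξ])) (hL2 j) (hmean j)
      (fun s t hst => (hindep j).indepFun hst) ?_
    simpa only [hmbar2, sq_abs] using
      le_ciSup (Finite.bddAbove_range fun j => (T0 : ℝ)⁻¹ * ∑ s, ∫ ω, ε j s ω ^ 2 ∂P) j
  have hCp : 1 ≤ poissonRosenthalConst p ^ ((1 : ℝ) / p) :=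
    Real.one_le_rpow (one_le_poissonRosenthalConst hp hp2) (by positivity)
  calc ∫ ω, |∑ j, W j ω * εbar j ω| ∂P
      ≤ wBar * ∑ j, ∫ ω, |εbar j ω| ∂P :=
        integral_abs_sum_mul_le_of_abs_le hWbd fun j => hεbar_eq j ▸
          integrable_finsetSum _ fun s _ => ((hL2 j s).integrable one_le_two).const_mul (c s)
    _ ≤ wBar * ∑ _j : Fin J, lamBar ^ 2 * f / ξ * (Real.sqrt mbar2 / Real.sqrt T0) := by
        gcongr with j
        exact hεbar_L1 j
    _ = wBar * J * 1 * (lamBar ^ 2 * f / ξ) * (Real.sqrt mbar2 / Real.sqrt T0) := by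
        simp only [sum_const, card_univ, Fintype.card_fin, nsmul_eq_mul]
        ring
    _ ≤ _ := by gcongr; exact le_max_right _ _

/-- The expectation bound on the leading bias term
`R_{1t} = ∑_j W_j ε̄_j` in the proof of Theorem 1: if for each `j` the shocks
`ε_{j,1}, …, ε_{j,T0}` are independent, mean zero, with finite `p`-th moments, the
coefficients satisfy `|c_s| ≤ λ̄² f/(T0 ξ)`, `ε̄_j = ∑_s c_s ε_{j,s}`, and the
random weights satisfy `|W_j| ≤ w̄` a.s., then
`E|∑_j W_j ε̄_j| ≤ w̄ J C(p)^{1/p} (λ̄² f/ξ) max{m̄_p^{1/p}/T0^{1−1/p}, m̄_2^{1/2}/T0^{1/2}}`. -/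
theorem expected_bias_term_bound
    {Ω : Type*} [MeasurableSpace Ω] (P : Measure Ω) [IsProbabilityMeasure P]
    (p J T0 f : ℕ) (hp : Even p) (hp2 : 2 ≤ p) (hJ : 0 < J) (hT0 : 0 < T0) (hf : 0 < f)
    (lamBar ξ wBar : ℝ) (hlam : 0 < lamBar) (hξ : 0 < ξ) (hw : 0 ≤ wBar)
    (ε : Fin J → Fin T0 → Ω → ℝ)
    (hmeas : ∀ j s, Measurable (ε j s))
    (hindep : ∀ j, iIndepFun (ε j) P)
    (hmean : ∀ j s, ∫ ω, ε j s ω ∂P = 0)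
    (hmom : ∀ j s, Integrable (fun ω => |ε j s ω| ^ p) P)
    (mbar2 mbarp : ℝ)
    (hmbar2 : mbar2 = ⨆ j : Fin J, (T0 : ℝ)⁻¹ * ∑ s, ∫ ω, |ε j s ω| ^ 2 ∂P)
    (hmbarp : mbarp = ⨆ j : Fin J, (T0 : ℝ)⁻¹ * ∑ s, ∫ ω, |ε j s ω| ^ p ∂P)
    (c : Fin T0 → ℝ) (hc : ∀ s, |c s| ≤ lamBar ^ 2 * f / (T0 * ξ))
    (εbar : Fin J → Ω → ℝ) (hεbar : ∀ j ω, εbar j ω = ∑ s, c s * ε j s ω)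
    (W : Fin J → Ω → ℝ) (hWmeas : ∀ j, Measurable (W j))
    (hWbd : ∀ᵐ ω ∂P, ∀ j, |W j ω| ≤ wBar) :
    ∫ ω, |∑ j, W j ω * εbar j ω| ∂P ≤
      wBar * J * poissonRosenthalConst p ^ ((1 : ℝ) / p) * (lamBar ^ 2 * f / ξ) *
        max (mbarp ^ ((1 : ℝ) / p) / (T0 : ℝ) ^ (1 - 1 / (p : ℝ)))
          (Real.sqrt mbar2 / Real.sqrt T0) :=
  expected_bias_term_bound_general P p J T0 f hp hp2 hT0 lamBar ξ wBar hξ hw ε hmeas hindep hmean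
    hmom mbar2 mbarp hmbar2 c hc εbar hεbar W hWbd
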